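/- arXiv:1412.2840 — 8 statements merged into one kernel-verified Lean document; each statement's English description precedes it below -/
import Mathlib

section
/- For all derivations x, y, z of P_n, the associator of the left-symmetric product satisfies (x·y)·z − x·(y·z) = (y·x)·z − y·(x·z); that is, the algebra of all derivations of P_n equipped with the product · is a left-symmetric algebra. -/
open MvPolynomial

/-- `Pn k n` is the polynomial algebra `k[x₁,…,xₙ]`. -/
abbrev Pn (k : Type*) [CommRing k] (n : ℕ) := MvPolynomial (Fin n) k

/-- `Der k n` is the space of `k`-linear derivations of `Pn k n`. -/
abbrev Der (k : Type*) [CommRing k] (n : ℕ) := Derivation k (Pn k n) (Pn k n)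

variable {k : Type*} [Field k] [CharZero k] {n : ℕ}

/-- The left-symmetric product of derivations: `(D · E)(xᵢ) = D (E xᵢ)`. -/
noncomputable def lsMul (D E : Der k n) : Der k n :=
  MvPolynomial.mkDerivation k (fun i => D (E (MvPolynomial.X i)))

/-- The Jacobian matrix of a derivation: `(J D)ᵢⱼ = ∂(D xᵢ)/∂xⱼ`. -/
noncomputable def jac (D : Der k n) : Matrix (Fin n) (Fin n) (Pn k n) :=
  Matrix.of fun i j => MvPolynomial.pderiv j (D (MvPolynomial.X i))

/-- The divergence of a derivation. -/
noncomputable def divg (D : Der k n) : Pn k n :=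
  ∑ i, MvPolynomial.pderiv i (D (MvPolynomial.X i))

/-- Right powers: `rpow D 1 = D`, `rpow D (r+1) = (rpow D r) · D` (for `r ≥ 1`). -/
noncomputable def rpow (D : Der k n) : ℕ → Der k n
  | 0 => D
  | 1 => D
  | (r+2) => lsMul (rpow D (r+1)) D

/-- Left powers: `lpow D 1 = D`, `lpow D (r+1) = D · (lpow D r)` (for `r ≥ 1`). -/
noncomputable def lpow (D : Der k n) : ℕ → Der k n
  | 0 => D
  | 1 => D
  | (r+2) => lsMul D (lpow D (r+1))

/-- Right multiplication operator `R_D : E ↦ E · D`, as a `k`-linear endomorphism. -/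
noncomputable def rmulOp (D : Der k n) : Der k n →ₗ[k] Der k n where
  toFun E := lsMul E D
  map_add' E₁ E₂ := by
    show (MvPolynomial.mkDerivationEquiv k) _ =
      (MvPolynomial.mkDerivationEquiv k) _ + (MvPolynomial.mkDerivationEquiv k) _
    rw [← map_add]
    exact congrArg _ (funext fun i => by simp)
  map_smul' c E := by
    show (MvPolynomial.mkDerivationEquiv k) _ = c • (MvPolynomial.mkDerivationEquiv k) _
    rw [← map_smul]
    exact congrArg _ (funext fun i => by simp)

/-- Left multiplication operator `L_D : E ↦ D · E`, as a `k`-linear endomorphism. -/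
noncomputable def lmulOp (D : Der k n) : Der k n →ₗ[k] Der k n where
  toFun E := lsMul D E
  map_add' E₁ E₂ := by
    show (MvPolynomial.mkDerivationEquiv k) _ =
      (MvPolynomial.mkDerivationEquiv k) _ + (MvPolynomial.mkDerivationEquiv k) _
    rw [← map_add]
    exact congrArg _ (funext fun i => by simp)
  map_smul' c E := by
    show (MvPolynomial.mkDerivationEquiv k) _ = c • (MvPolynomial.mkDerivationEquiv k) _
    rw [← map_smul]
    exact congrArg _ (funext fun i => by simp)

/-- `Zc F i a` is the coefficient of `t^i` in the image of `a` under `xⱼ ↦ xⱼ + t·fⱼ`. -/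
noncomputable def Zc (F : Fin n → Pn k n) (i : ℕ) (a : Pn k n) : Pn k n :=
  (MvPolynomial.aeval
    (fun j => Polynomial.C (MvPolynomial.X j) + Polynomial.C (F j) * Polynomial.X :
      Fin n → Polynomial (Pn k n)) a).coeff i

/-- `PsiOp F m a = Σ (−1)^{k−1} r_k Z_{r₁}(Z_{r₂}(⋯ Z_{r_k}(a)⋯))`, summed over
compositions `(r₁,…,r_k)` of `m`. -/
noncomputable def PsiOp (F : Fin n → Pn k n) (m : ℕ) (a : Pn k n) : Pn k n :=
  ∑ c : Composition m,
    (-1 : Pn k n) ^ (c.length - 1) * ((c.blocks.getLastD 0 : ℕ) : Pn k n) *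
      (c.blocks.foldr (fun r b => Zc F r b) a)

lemma lsMul_sub_lsMul (x y : Der k n) : lsMul x y - lsMul y x = ⁅x, y⁆ := by
  apply MvPolynomial.derivation_ext
  intro i
  simp [lsMul, Derivation.commutator_apply]

/-- the algebra of derivations of `Pₙ` with the product `·` is left-symmetric. -/
theorem lsMul_left_symmetric (hn : 1 ≤ n) (x y z : Der k n) :
    lsMul (lsMul x y) z - lsMul x (lsMul y z) = lsMul (lsMul y x) z - lsMul y (lsMul x z) := by
  apply MvPolynomial.derivation_ext
  intro i
  simp only [Derivation.sub_apply, lsMul, MvPolynomial.mkDerivation_X]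
  have h := congrArg (fun D : Der k n => D (z (MvPolynomial.X i))) (lsMul_sub_lsMul x y)
  simp only [Derivation.sub_apply, Derivation.commutator_apply] at h
  simp only [lsMul] at h
  linear_combination h
end

section
/- A derivation D of P_n is locally nilpotent (for every a ∈ P_n there exists N with D applied N times to a equal to 0) if and only if D is a left nilpotent element of the left-symmetric algebra of derivations, i.e., there exists m ≥ 1 such that the left power D^m is the zero derivation. -/
open MvPolynomial

variable {k : Type*} [Field k] [CharZero k] {n : ℕ}

lemma lsMul_apply_X (D E : Der k n) (i : Fin n) : lsMul D E (X i) = D (E (X i)) := by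
  simp [lsMul, MvPolynomial.mkDerivation_X]

lemma lpow_apply_X (D : Der k n) (m : ℕ) (i : Fin n) :
    lpow D (m + 1) (X i) = (⇑D)^[m + 1] (X i) := by
  induction m with
  | zero => simp [lpow]
  | succ r ih =>
    show lsMul D (lpow D (r + 1)) (X i) = _
    rw [lsMul_apply_X, ih, ← Function.iterate_succ_apply' D]

lemma iter_zero (D : Der k n) (s : ℕ) : (⇑D)^[s] 0 = 0 :=
  Function.iterate_fixed (map_zero D) s

lemma iter_add (D : Der k n) (s : ℕ) (x y : Pn k n) :
    (⇑D)^[s] (x + y) = (⇑D)^[s] x + (⇑D)^[s] y := by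
  induction s with
  | zero => rfl
  | succ r ih =>
    rw [Function.iterate_succ_apply', Function.iterate_succ_apply',
      Function.iterate_succ_apply', ih, map_add]

lemma iter_stable (D : Der k n) {N K : ℕ} (h : N ≤ K) {a : Pn k n}
    (ha : (⇑D)^[N] a = 0) : (⇑D)^[K] a = 0 := by
  rw [← Nat.sub_add_cancel h, Function.iterate_add_apply, ha, iter_zero]

lemma iter_mul_zero (D : Der k n) : ∀ s N M (a b : Pn k n), N + M ≤ s + 1 →
    (⇑D)^[N] a = 0 → (⇑D)^[M] b = 0 → (⇑D)^[s] (a * b) = 0 := by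
  intro s
  induction s with
  | zero =>
    intro N M a b h ha hb
    rcases Nat.le_one_iff_eq_zero_or_eq_one.mp h with h1 | h1
    · obtain ⟨hN, hM⟩ := Nat.add_eq_zero.mp h1
      subst hN; subst hM
      simp only [Function.iterate_zero, id] at ha hb ⊢
      rw [ha, zero_mul]
    · rcases Nat.add_eq_one_iff.mp h1 with ⟨hN, hM⟩ | ⟨hN, hM⟩
      · subst hN
        simp only [Function.iterate_zero, id] at ha ⊢
        rw [ha, zero_mul]
      · subst hM
        simp only [Function.iterate_zero, id] at hb ⊢
        rw [hb, mul_zero]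
  | succ s ih =>
    intro N M a b h ha hb
    rw [Function.iterate_succ_apply, show D (a * b) = a * D b + b * D a by
      rw [Derivation.leibniz]; simp [smul_eq_mul], iter_add]
    have t1 : (⇑D)^[s] (a * D b) = 0 := by
      rcases M with _ | M'
      · simp only [Function.iterate_zero, id] at hb
        rw [hb, map_zero, mul_zero, iter_zero]
      · exact ih N M' a (D b) (by omega) ha (by
          rw [← Function.iterate_succ_apply]; exact hb)
    have t2 : (⇑D)^[s] (b * D a) = 0 := by
      rcases N with _ | N'
      · simp only [Function.iterate_zero, id] at ha
        rw [ha, map_zero, mul_zero, iter_zero]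
      · exact ih M N' b (D a) (by omega) hb (by
          rw [← Function.iterate_succ_apply]; exact ha)
    rw [t1, t2, add_zero]

/-- `D` is locally nilpotent iff `D` is left nilpotent. -/
theorem locallyNilpotent_iff_leftNilpotent (hn : 1 ≤ n) (D : Der k n) :
    (∀ a : Pn k n, ∃ N : ℕ, (⇑D)^[N] a = 0) ↔ ∃ m : ℕ, 1 ≤ m ∧ lpow D m = 0 := by
  constructor
  · intro h
    choose N hN using fun i => h (X i)
    refine ⟨Finset.univ.sup N + 1, Nat.le_add_left 1 _, ?_⟩
    apply MvPolynomial.derivation_ext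
    intro i
    rw [lpow_apply_X]
    show _ = (0 : Der k n) (X i)
    rw [Derivation.coe_zero, Pi.zero_apply]
    exact iter_stable D (le_trans (Finset.le_sup (Finset.mem_univ i)) (Nat.le_succ _)) (hN i)
  · rintro ⟨m, hm, hD⟩ a
    obtain ⟨r, rfl⟩ := Nat.exists_eq_add_of_le hm
    have hX : ∀ i, (⇑D)^[1 + r] (X i) = 0 := by
      intro i
      have h0 : lpow D (1 + r) (X i) = 0 := by rw [hD]; rfl
      rw [show 1 + r = r + 1 by omega] at h0 ⊢
      rwa [lpow_apply_X] at h0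
    induction a using MvPolynomial.induction_on with
    | C c =>
      refine ⟨1, ?_⟩
      simp only [Function.iterate_one]
      rw [show (C c : Pn k n) = algebraMap k (Pn k n) c from rfl]
      exact Derivation.map_algebraMap D c
    | add p q hp hq =>
      obtain ⟨Np, hNp⟩ := hp
      obtain ⟨Nq, hNq⟩ := hq
      exact ⟨max Np Nq, by
        rw [iter_add, iter_stable D (le_max_left _ _) hNp,
          iter_stable D (le_max_right _ _) hNq, add_zero]⟩
    | mul_X p i hp =>
      obtain ⟨Np, hNp⟩ := hp
      exact ⟨Np + (1 + r), iter_mul_zero D _ Np (1 + r) p (X i) (by omega) hNp (hX i)⟩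
end

section
/- There exists a k-algebra isomorphism θ from the unital subalgebra of the k-linear endomorphism algebra of the space of derivations of P_n generated by all right multiplication operators R_D (for D ranging over all derivations of P_n) onto the matrix algebra M_n(P_n), such that θ(R_D) = J(D) for every derivation D of P_n. -/
open MvPolynomial

variable {k : Type*} [Field k] [CharZero k] {n : ℕ}

/-! Identify a derivation `E` of `Pₙ` with the vector `(E x₁, …, E xₙ) ∈ Pₙⁿ`. By the chain rule
`E (D xᵢ) = ∑ⱼ ∂ⱼ(D xᵢ) · E xⱼ`, so `R_D` acts on these vectors as the matrix `J(D)`. Matrices act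
faithfully on `Pₙⁿ`, hence `M ↦ (E ↦ M E)` is an injective algebra map `Mₙ(Pₙ) → End_k(Der)` with
`J(D) ↦ R_D`, and it remains to see that the Jacobians generate `Mₙ(Pₙ)`. In characteristic zero
every `p` is some `∂ⱼ g`, and `E_{ij}(∂ⱼ g) = J(g ∂ᵢ) · J(xⱼ ∂ⱼ)`. -/

theorem MvPolynomial.pderiv_surjective {σ R : Type*} [Field R] [CharZero R] (i : σ) :
    Function.Surjective (pderiv i : MvPolynomial σ R → MvPolynomial σ R) := by
  intro p
  induction p using MvPolynomial.induction_on' with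
  | monomial s r =>
    refine ⟨monomial (s + Finsupp.single i 1) (((s i : R) + 1)⁻¹ * r), ?_⟩
    have hne : (s i : R) + 1 ≠ 0 := Nat.cast_add_one_ne_zero (s i)
    simp [pderiv_monomial, mul_right_comm _ r, inv_mul_cancel₀ hne]
  | add p q hp hq =>
    obtain ⟨f, rfl⟩ := hp
    obtain ⟨g, rfl⟩ := hq
    exact ⟨f + g, map_add _ f g⟩

theorem Derivation.sum_apply {R A M ι : Type*} [CommSemiring R] [CommSemiring A] [Algebra R A]
    [AddCommMonoid M] [Module A M] [Module R M] (s : Finset ι) (D : ι → Derivation R A M) (a : A) :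
    (∑ i ∈ s, D i) a = ∑ i ∈ s, D i a := by
  rw [← Derivation.coeFnAddMonoidHom_apply, map_sum, Finset.sum_apply]
  rfl

namespace MvPolynomial

variable {σ R : Type*} [Fintype σ] [CommSemiring R]

theorem derivation_apply_eq_sum_pderiv
    (D : Derivation R (MvPolynomial σ R) (MvPolynomial σ R)) (p : MvPolynomial σ R) :
    D p = ∑ i, pderiv i p * D (X i) := by
  classical
  have hD : D = ∑ i, D (X i) • pderiv i :=
    derivation_ext fun j => by simp [Derivation.sum_apply, pderiv_X, Pi.single_apply]
  conv_lhs => rw [hD]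
  simp [Derivation.sum_apply, mul_comm]

variable [DecidableEq σ]

noncomputable def derivationMatrixAction :
    Matrix σ σ (MvPolynomial σ R) →ₐ[R]
      Module.End R (Derivation R (MvPolynomial σ R) (MvPolynomial σ R)) :=
  ((mkDerivationEquiv R).conjAlgEquiv R).toAlgHom.comp (Algebra.lsmul R R (σ → MvPolynomial σ R))

theorem derivationMatrixAction_apply (M : Matrix σ σ (MvPolynomial σ R))
    (E : Derivation R (MvPolynomial σ R) (MvPolynomial σ R)) :
    derivationMatrixAction M E = mkDerivation R (M.mulVec fun i => E (X i)) := rfl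

theorem derivationMatrixAction_injective :
    Function.Injective (derivationMatrixAction (σ := σ) (R := R)) := by
  intro M N h
  refine Matrix.ext_iff_mulVec.2 fun v => (mkDerivationEquiv R).injective ?_
  have hv := congr($h (mkDerivation R v))
  simp only [derivationMatrixAction_apply, mkDerivation_X] at hv
  exact hv

end MvPolynomial

omit [CharZero k] in
theorem derivationMatrixAction_jac (D : Der k n) : derivationMatrixAction (jac D) = rmulOp D := by
  refine LinearMap.ext fun E => derivation_ext fun i => ?_
  change _ = lsMul E D (X i)
  rw [derivationMatrixAction_apply, lsMul, mkDerivation_X, mkDerivation_X,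
    derivation_apply_eq_sum_pderiv E]
  rfl

omit [CharZero k] in
theorem jac_mkDerivation_single (i : Fin n) (g : Pn k n) :
    jac (mkDerivation k (Pi.single i g)) = ∑ j, Matrix.single i j (pderiv j g) := by
  refine Matrix.ext fun a b => ?_
  rcases eq_or_ne a i with rfl | h
  · simp [jac, Matrix.sum_apply, Matrix.single_apply]
  · simp [jac, Matrix.sum_apply, h, h.symm]

theorem single_mem_adjoin_range_jac (i j : Fin n) (p : Pn k n) :
    Matrix.single i j p ∈ Algebra.adjoin k (Set.range (jac : Der k n → _)) := by
  obtain ⟨g, rfl⟩ := pderiv_surjective j p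
  have hX : jac (mkDerivation k (Pi.single j (X j))) = Matrix.single j j (1 : Pn k n) := by
    rw [jac_mkDerivation_single, Finset.sum_eq_single j
      (fun b _ hb => by rw [pderiv_X_of_ne hb.symm, Matrix.single_zero]) (by simp), pderiv_X_self]
  have hprod : jac (mkDerivation k (Pi.single i g)) * jac (mkDerivation k (Pi.single j (X j))) =
      Matrix.single i j (pderiv j g) := by
    rw [hX, jac_mkDerivation_single, Finset.sum_mul, Finset.sum_eq_single j
      (fun b _ hb => Matrix.single_mul_single_of_ne _ i b j hb 1) (by simp),
      Matrix.single_mul_single_same, mul_one]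
  exact hprod ▸ mul_mem (Algebra.subset_adjoin ⟨_, rfl⟩) (Algebra.subset_adjoin ⟨_, rfl⟩)

theorem adjoin_range_jac_eq_top : Algebra.adjoin k (Set.range (jac : Der k n → _)) = ⊤ := by
  refine eq_top_iff.2 fun M _ => ?_
  rw [Matrix.matrix_eq_sum_single M]
  exact sum_mem fun i _ => sum_mem fun j _ => single_mem_adjoin_range_jac i j (M i j)

theorem adjoin_range_rmulOp_eq_range :
    Algebra.adjoin k (Set.range (rmulOp : Der k n → Module.End k (Der k n))) =
      (derivationMatrixAction : Matrix (Fin n) (Fin n) (Pn k n) →ₐ[k] _).range := by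
  have h : (rmulOp : Der k n → Module.End k (Der k n)) = derivationMatrixAction ∘ jac :=
    funext fun D => (derivationMatrixAction_jac D).symm
  rw [h, Set.range_comp, ← AlgHom.map_adjoin, adjoin_range_jac_eq_top, Algebra.map_top]

theorem exists_rightMultiplicationAlgebra_iso_general :
    ∃ θ : (Algebra.adjoin k (Set.range (rmulOp : Der k n → Module.End k (Der k n)))) ≃ₐ[k]
        Matrix (Fin n) (Fin n) (Pn k n),
      ∀ D : Der k n,
        θ ⟨rmulOp D, Algebra.subset_adjoin (Set.mem_range_self D)⟩ = jac D := by
  refine ⟨(Subalgebra.equivOfEq _ _ adjoin_range_rmulOp_eq_range).trans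
    (AlgEquiv.ofInjective _ derivationMatrixAction_injective).symm, fun D => ?_⟩
  rw [AlgEquiv.trans_apply, AlgEquiv.symm_apply_eq]
  exact Subtype.ext (derivationMatrixAction_jac D).symm

/-- the unital subalgebra of `End_k(Der)` generated by the right
multiplication operators is isomorphic to `Mₙ(Pₙ)` via `R_D ↦ J(D)`. -/
theorem exists_rightMultiplicationAlgebra_iso (hn : 1 ≤ n) :
    ∃ θ : (Algebra.adjoin k (Set.range (rmulOp : Der k n → Module.End k (Der k n)))) ≃ₐ[k]
        Matrix (Fin n) (Fin n) (Pn k n),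
      ∀ D : Der k n,
        θ ⟨rmulOp D, Algebra.subset_adjoin (Set.mem_range_self D)⟩ = jac D :=
  exists_rightMultiplicationAlgebra_iso_general
end

section
/- For a derivation D of P_n, the Jacobian matrix J(D) is nilpotent if and only if the right multiplication operator R_D is a nilpotent k-linear endomorphism of the space of derivations of P_n; more precisely, for every s ≥ 1, J(D)^s = 0 if and only if R_D^s = 0. -/
open MvPolynomial

variable {k : Type*} [Field k] [CharZero k] {n : ℕ}

set_option linter.unusedSectionVars false in
lemma der_sum_apply (f : Fin n → Der k n) (p : Pn k n) :
    (∑ j, f j) p = ∑ j, f j p := by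
  have : ⇑(∑ j, f j) = ∑ j, ⇑(f j) := map_sum Derivation.coeFnAddMonoidHom f Finset.univ
  rw [show (∑ j, f j) p = (⇑(∑ j, f j)) p from rfl, this, Finset.sum_apply]

set_option linter.unusedSectionVars false in
lemma der_eq_sum (E : Der k n) (p : Pn k n) :
    E p = ∑ j, pderiv j p * E (X j) := by
  have h : E = ∑ j, E (X j) • (pderiv j : Der k n) := by
    apply derivation_ext
    intro i
    rw [der_sum_apply]
    simp [Derivation.smul_apply, pderiv_X, Pi.single_apply, Finset.sum_ite_eq', eq_comm]
  conv_lhs => rw [h, der_sum_apply]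
  simp [Derivation.smul_apply, smul_eq_mul, mul_comm]

lemma rmul_pow_apply (D : Der k n) (s : ℕ) (E : Der k n) (i : Fin n) :
    (((rmulOp D : Module.End k (Der k n)) ^ s) E) (X i)
      = ∑ j, ((jac D) ^ s) i j * E (X j) := by
  induction s generalizing E with
  | zero =>
    simp [Matrix.one_apply]
  | succ s ih =>
    have h1 : ((rmulOp D : Module.End k (Der k n)) ^ (s + 1)) E
        = ((rmulOp D : Module.End k (Der k n)) ^ s) (rmulOp D E) := by
      rw [pow_succ]; rfl
    rw [h1, ih]
    have h2 : ∀ j, (rmulOp D E) (X j) = ∑ l, (jac D) j l * E (X l) := by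
      intro j
      show (lsMul E D) (X j) = _
      rw [lsMul, mkDerivation_X, der_eq_sum]
      exact Finset.sum_congr rfl fun l _ => rfl
    calc ∑ j, ((jac D) ^ s) i j * (rmulOp D E) (X j)
        = ∑ j, ∑ l, ((jac D) ^ s) i j * ((jac D) j l * E (X l)) := by
          simp_rw [h2, Finset.mul_sum]
      _ = ∑ l, (∑ j, ((jac D) ^ s) i j * (jac D) j l) * E (X l) := by
          rw [Finset.sum_comm]
          simp_rw [Finset.sum_mul, mul_assoc]
      _ = ∑ l, ((jac D) ^ (s + 1)) i l * E (X l) := by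
          refine Finset.sum_congr rfl fun l _ => ?_
          rw [pow_succ, Matrix.mul_apply]

/-- `J(D)` is nilpotent iff `R_D` is nilpotent; more precisely
`J(D)^s = 0 ↔ R_D^s = 0` for every `s ≥ 1`. -/
theorem jac_nilpotent_iff_rmulOp_nilpotent (hn : 1 ≤ n) (D : Der k n) :
    (IsNilpotent (jac D) ↔ IsNilpotent (rmulOp D : Module.End k (Der k n))) ∧
      ∀ s : ℕ, 1 ≤ s →
        ((jac D) ^ s = 0 ↔ (rmulOp D : Module.End k (Der k n)) ^ s = 0) := by
  have main : ∀ s : ℕ,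
      ((jac D) ^ s = 0 ↔ (rmulOp D : Module.End k (Der k n)) ^ s = 0) → True := fun _ _ => trivial
  have key : ∀ s : ℕ, (jac D) ^ s = 0 → (rmulOp D : Module.End k (Der k n)) ^ s = 0 := by
    intro s h
    apply LinearMap.ext
    intro E
    apply derivation_ext
    intro i
    rw [rmul_pow_apply, h]
    simp
  have key2 : ∀ s : ℕ, (rmulOp D : Module.End k (Der k n)) ^ s = 0 → (jac D) ^ s = 0 := by
    intro s h
    apply Matrix.ext
    intro i j
    have h3 := congrArg (fun f : Module.End k (Der k n) => (f (pderiv j : Der k n)) (X i)) h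
    simp only [LinearMap.zero_apply, Derivation.coe_zero, Pi.zero_apply] at h3
    rw [rmul_pow_apply] at h3
    simpa [pderiv_X, Pi.single_apply, mul_ite, Finset.sum_ite_eq', eq_comm] using h3
  refine ⟨⟨fun ⟨m, hm⟩ => ⟨m, key m hm⟩, fun ⟨m, hm⟩ => ⟨m, key2 m hm⟩⟩,
    fun s _ => ⟨key s, key2 s⟩⟩
end

section
/- If D is a derivation of P_n whose Jacobian matrix J(D) is nilpotent, then D is a right nilpotent element of the left-symmetric algebra of derivations, i.e., there exists m ≥ 2 such that the right power D^{[m]} is the zero derivation. -/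
open MvPolynomial

variable {k : Type*} [Field k] [CharZero k] {n : ℕ}

omit [CharZero k] in
theorem deriv_eq_sum (E : Der k n) (p : Pn k n) :
    E p = ∑ j, MvPolynomial.pderiv j p * E (MvPolynomial.X j) := by
  induction p using MvPolynomial.induction_on with
  | C a => simp [MvPolynomial.C_eq_smul_one]
  | add p q hp hq => simp [hp, hq, Finset.sum_add_distrib, add_mul]
  | mul_X p i hp =>
      rw [Derivation.leibniz, add_comm]
      simp only [smul_eq_mul, hp, MvPolynomial.pderiv_mul, MvPolynomial.pderiv_X,
        add_mul, Finset.sum_add_distrib, Finset.mul_sum, Pi.single_apply, mul_ite,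
        mul_one, mul_zero, ite_mul, zero_mul, Finset.sum_ite_eq']
      congr 1
      · exact Finset.sum_congr rfl fun j _ => by ring
      · rw [Finset.sum_ite_eq]; simp

omit [CharZero k] in
theorem rpow_apply_X (D : Der k n) (r : ℕ) (i : Fin n) :
    rpow D (r + 1) (MvPolynomial.X i) =
      ((jac D ^ r).mulVec (fun j => D (MvPolynomial.X j))) i := by
  induction r generalizing i with
  | zero => simp [rpow, Matrix.one_mulVec]
  | succ r ih =>
      show lsMul (rpow D (r + 1)) D (MvPolynomial.X i) = _
      rw [lsMul, MvPolynomial.mkDerivation_X, deriv_eq_sum]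
      rw [pow_succ', ← Matrix.mulVec_mulVec]
      simp only [Matrix.mulVec, dotProduct]
      refine Finset.sum_congr rfl fun j _ => ?_
      rw [ih j]
      simp [jac, Matrix.mulVec, dotProduct]

/-- if `J(D)` is nilpotent then `D` is right nilpotent. -/
theorem rightNilpotent_of_jac_nilpotent (hn : 1 ≤ n) (D : Der k n)
    (h : IsNilpotent (jac D)) :
    ∃ m : ℕ, 2 ≤ m ∧ rpow D m = 0 := by
  obtain ⟨N, hN⟩ := h
  refine ⟨N + 2, by omega, ?_⟩
  apply MvPolynomial.derivation_ext
  intro i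
  rw [show N + 2 = (N + 1) + 1 from rfl, rpow_apply_X, pow_succ, hN]
  simp [Matrix.zero_mulVec]
end

section
/- There exists a k-algebra isomorphism ψ from the unital subalgebra of the k-linear endomorphism algebra of the space of derivations of P_n generated by all left multiplication operators L_D (for D ranging over all derivations of P_n) onto the unital subalgebra of the k-linear endomorphism algebra of P_n generated by all derivations of P_n (viewed as k-linear endomorphisms of P_n), such that ψ(L_D) = D for every derivation D. -/
open MvPolynomial

variable {k : Type*} [Field k] [CharZero k] {n : ℕ}

/-!
A derivation of `Pₙ` is determined by its values on the variables, so `Der ≅ Pₙⁿ`, and under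
this identification `L_D` is just `D` acting coordinatewise (`(D·E)(xᵢ) = D(E xᵢ)`).
Coordinatewise action is an algebra map `End_k(Pₙ) → End_k(Der)`, faithful as soon as `n ≥ 1`,
so it restricts to an isomorphism from the algebra generated by the derivations onto the
algebra generated by the `L_D`; `ψ` is its inverse.
-/

namespace Module.End

variable (R M I : Type*) [CommSemiring R] [AddCommMonoid M] [Module R M]

def compLeftAlgHom : Module.End R M →ₐ[R] Module.End R (I → M) where
  toFun f := f.compLeft I
  map_one' := rfl
  map_mul' _ _ := rfl
  map_zero' := rfl
  map_add' _ _ := rfl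
  commutes' _ := rfl

theorem compLeftAlgHom_injective [Nonempty I] : Function.Injective (compLeftAlgHom R M I) := by
  intro f g h
  ext x
  exact congr_fun (LinearMap.congr_fun h fun _ => x) (Classical.arbitrary I)

end Module.End

namespace Subalgebra

variable {R A B ι : Type*} [CommSemiring R] [Semiring A] [Semiring B] [Algebra R A] [Algebra R B]

noncomputable def adjoinRangeEquivOfInjective (φ : A →ₐ[R] B) (hφ : Function.Injective φ)
    {f : ι → A} {g : ι → B} (hfg : ∀ i, φ (f i) = g i) :
    Algebra.adjoin R (Set.range f) ≃ₐ[R] Algebra.adjoin R (Set.range g) :=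
  (equivMapOfInjective _ φ hφ).trans <| equivOfEq _ _ <| by
    rw [AlgHom.map_adjoin, ← Set.range_comp]
    exact congrArg _ (congrArg Set.range (funext hfg))

theorem adjoinRangeEquivOfInjective_symm_apply_self (φ : A →ₐ[R] B) (hφ : Function.Injective φ)
    {f : ι → A} {g : ι → B} (hfg : ∀ i, φ (f i) = g i) (i : ι) :
    (adjoinRangeEquivOfInjective φ hφ hfg).symm
        ⟨g i, Algebra.subset_adjoin (Set.mem_range_self i)⟩ =
      ⟨f i, Algebra.subset_adjoin (Set.mem_range_self i)⟩ :=
  (AlgEquiv.symm_apply_eq _).2 (Subtype.ext (hfg i).symm)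

end Subalgebra

namespace MvPolynomial

variable {R σ A : Type*} [CommSemiring R] [AddCommMonoid A] [Module R A]
  [Module (MvPolynomial σ R) A] [IsScalarTower R (MvPolynomial σ R) A]

noncomputable def derivationAction :
    Module.End R A →ₐ[R] Module.End R (Derivation R (MvPolynomial σ R) A) :=
  ((mkDerivationEquiv R).conjAlgEquiv R).toAlgHom.comp (Module.End.compLeftAlgHom R A σ)

theorem derivationAction_apply_X (T : Module.End R A) (E : Derivation R (MvPolynomial σ R) A)
    (i : σ) : derivationAction T E (X i) = T (E (X i)) :=
  mkDerivation_X R _ i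

theorem derivationAction_injective [Nonempty σ] :
    Function.Injective
      (derivationAction : Module.End R A → Module.End R (Derivation R (MvPolynomial σ R) A)) :=
  ((mkDerivationEquiv R).conjAlgEquiv R).injective.comp
    (Module.End.compLeftAlgHom_injective R A σ)

end MvPolynomial

theorem derivationAction_toLinearMap {k : Type*} [Field k] {n : ℕ} (D : Der k n) :
    derivationAction D.toLinearMap = lmulOp D :=
  LinearMap.ext fun E => MvPolynomial.derivation_ext fun i => by
    rw [derivationAction_apply_X]
    exact (mkDerivation_X k (fun j => D (E (X j))) i).symm

/-- the unital subalgebra of `End_k(Der)` generated by the left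
multiplication operators is isomorphic, via `L_D ↦ D`, to the unital subalgebra of
`End_k(Pₙ)` generated by all derivations. -/
theorem exists_leftMultiplicationAlgebra_iso (hn : 1 ≤ n) :
    ∃ ψ : (Algebra.adjoin k (Set.range (lmulOp : Der k n → Module.End k (Der k n)))) ≃ₐ[k]
        (Algebra.adjoin k
          (Set.range (fun D : Der k n => (D.toLinearMap : Module.End k (Pn k n))))),
      ∀ D : Der k n,
        ((ψ ⟨lmulOp D, Algebra.subset_adjoin (Set.mem_range_self D)⟩ :
            Algebra.adjoin k
              (Set.range (fun D : Der k n => (D.toLinearMap : Module.End k (Pn k n))))) :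
          Module.End k (Pn k n)) = D.toLinearMap := by
  have : Nonempty (Fin n) := ⟨⟨0, hn⟩⟩
  have hL := derivationAction_toLinearMap (k := k) (n := n)
  exact ⟨(Subalgebra.adjoinRangeEquivOfInjective _ derivationAction_injective hL).symm,
    fun D => congrArg Subtype.val
      (Subalgebra.adjoinRangeEquivOfInjective_symm_apply_self _ derivationAction_injective hL D)⟩
end

section
/- For all derivations T and S of P_n, J(T·S) = T(J(S)) + J(S)·J(T), where T(J(S)) denotes the entrywise application of T to the matrix J(S) and the second summand is a matrix product. -/
open MvPolynomial

variable {k : Type*} [Field k] [CharZero k] {n : ℕ}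

lemma pderiv_comm' {k : Type*} [CommRing k] {n : ℕ} (i j : Fin n) (p : MvPolynomial (Fin n) k) :
    pderiv i (pderiv j p) = pderiv j (pderiv i p) := by
  induction p using MvPolynomial.induction_on with
  | C a => simp
  | add p q hp hq => simp [hp, hq]
  | mul_X p m hp => simp [Derivation.leibniz, hp, Pi.single_apply, apply_ite]; split_ifs <;> ring

lemma der_chain {k : Type*} [CommRing k] {n : ℕ}
    (D : Derivation k (MvPolynomial (Fin n) k) (MvPolynomial (Fin n) k))
    (p : MvPolynomial (Fin n) k) :
    D p = ∑ l, pderiv l p * D (X l) := by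
  induction p using MvPolynomial.induction_on with
  | C a => simp
  | add p q hp hq => simp [hp, hq, add_mul, Finset.sum_add_distrib]
  | mul_X p m hp =>
    rw [D.leibniz, hp]
    simp only [smul_eq_mul, Finset.mul_sum]
    have h2 : ∀ l : Fin n, pderiv l (p * X m) * D (X l)
        = p * (pderiv l (X m) * D (X l)) + X m * (pderiv l p * D (X l)) := fun l => by
      rw [(pderiv l).leibniz]; simp only [smul_eq_mul]; ring
    simp only [h2, Finset.sum_add_distrib, ← Finset.mul_sum, pderiv_X, Pi.single_apply,
      ite_mul, one_mul, zero_mul, Finset.sum_ite_eq', Finset.mem_univ, if_true,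
      smul_eq_mul, mul_ite, mul_zero]
    simp

/-- `J(T·S) = T(J(S)) + J(S)·J(T)`. -/
theorem jac_lsMul (hn : 1 ≤ n) (T S : Der k n) :
    jac (lsMul T S) = (jac S).map ⇑T + jac S * jac T := by
  refine Matrix.ext fun i j => ?_
  simp only [jac, Matrix.add_apply, Matrix.map_apply, Matrix.mul_apply, Matrix.of_apply]
  rw [show lsMul T S (X i) = T (S (X i)) from mkDerivation_X _ _ _]
  rw [der_chain T (S (X i)), map_sum]
  have lhs_term : ∀ l, pderiv j (pderiv l (S (X i)) * T (X l))
      = pderiv j (pderiv l (S (X i))) * T (X l)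
        + pderiv l (S (X i)) * pderiv j (T (X l)) := fun l => by
    rw [(pderiv j).leibniz]; simp only [smul_eq_mul]; ring
  simp only [lhs_term, Finset.sum_add_distrib]
  congr 1
  rw [der_chain T (pderiv j (S (X i)))]
  exact Finset.sum_congr rfl fun l _ => by rw [pderiv_comm']
end

section
/- Fix an n-tuple F = (f_1,…,f_n) of elements of P_n and let D = D_F be the derivation with D(x_i) = f_i. Then for every m ≥ 1 and every a ∈ P_n, Σ (−1)^{k−1} · r_1 · Z_{r_1}(Z_{r_2}(⋯ Z_{r_k}(a) ⋯)) = (−1)^{m−1} · D^{[m]}(a), where the sum ranges over all compositions (r_1,…,r_k) of m, i.e., all finite sequences of positive integers with r_1 + ⋯ + r_k = m. -/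
open MvPolynomial

variable {k : Type*} [Field k] [CharZero k] {n : ℕ}

/-!
Write `Z(t) = ∑ Z_r tʳ`, a power series of `k`-linear operators on `Pₙ` with `Z₀ = 1`, and
`S(t) = Z(t)⁻¹`. Expanding the inverse over compositions turns the left-hand side into the
coefficient of `tᵐ` of `Θ(t) = t Z'(t) S(t)`, applied to `a`.

Since `a ↦ a(x + tF)` is a ring homomorphism, `Z` is a Hasse–Schmidt derivation: its
`t`-linear extension `Ẑ` is a ring automorphism of `Pₙ⟦t⟧`, with inverse `Ŝ`. With `δ = t d/dt`,
`t Z' = δ Ẑ - Ẑ δ`, so `Θ(a) = -Ẑ (δ (Ŝ a))` for `a ∈ Pₙ`: a derivation conjugated by an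
automorphism. Every coefficient `Θₘ` is therefore a derivation of `Pₙ`. From `Ẑ xᵢ = xᵢ + t fᵢ`
one gets `Θ₁ xᵢ = fᵢ` and `Θₘ₊₁ xᵢ = -Θₘ fᵢ`, the recursion defining `(-1)ᵐ⁻¹ D^[m]`.
-/

open Finset
open scoped PowerSeries

theorem Finset.Nat.sum_antidiagonal_antidiagonal_right_comm {M : Type*} [AddCommMonoid M]
    (f : ℕ → ℕ → ℕ → M) (n : ℕ) :
    ∑ x ∈ antidiagonal n, ∑ y ∈ antidiagonal x.1, f y.1 y.2 x.2 =
      ∑ x ∈ antidiagonal n, ∑ y ∈ antidiagonal x.1, f y.1 x.2 y.2 := by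
  simp only [Finset.sum_sigma']
  refine Finset.sum_nbij' (fun x => ⟨(x.2.1 + x.1.2, x.2.2), (x.2.1, x.1.2)⟩)
    (fun x => ⟨(x.2.1 + x.1.2, x.2.2), (x.2.1, x.1.2)⟩) ?_ ?_ ?_ ?_ ?_ <;>
  rintro ⟨⟨s, t⟩, ⟨u, v⟩⟩ <;> simp +contextual <;> omega

theorem Finset.Nat.sum_antidiagonal_antidiagonal_assoc {M : Type*} [AddCommMonoid M]
    (f : ℕ → ℕ → ℕ → M) (n : ℕ) :
    ∑ x ∈ antidiagonal n, ∑ y ∈ antidiagonal x.1, f y.1 y.2 x.2 =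
      ∑ x ∈ antidiagonal n, ∑ y ∈ antidiagonal x.2, f x.1 y.1 y.2 := by
  simp only [Finset.sum_sigma']
  refine Finset.sum_nbij' (fun x => ⟨(x.2.1, x.2.2 + x.1.2), (x.2.2, x.1.2)⟩)
    (fun x => ⟨(x.1.1 + x.2.1, x.2.2), (x.1.1, x.2.1)⟩) ?_ ?_ ?_ ?_ ?_ <;>
  rintro ⟨⟨s, t⟩, ⟨u, v⟩⟩ <;> simp +contextual <;> omega

instance : Unique (Composition 0) where
  default := Composition.ones 0
  uniq c := Composition.ext <| by simp [Composition.blocks_eq_nil]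

namespace Composition

theorem blocks_eq_headI_cons_tail {n : ℕ} (c : Composition (n + 1)) :
    c.blocks = c.blocks.headI :: c.blocks.tail :=
  (List.cons_head!_tail (by simp [blocks_eq_nil])).symm

theorem headI_blocks_pos {n : ℕ} (c : Composition (n + 1)) : 0 < c.blocks.headI :=
  c.blocks_pos (c.blocks_eq_headI_cons_tail ▸ List.mem_cons_self)

def consEquiv (n : ℕ) : Composition (n + 1) ≃ Σ r : Fin (n + 1), Composition (n - r) where
  toFun c :=
    have hsum : c.blocks.headI + c.blocks.tail.sum = n + 1 := by
      rw [← List.sum_cons, ← c.blocks_eq_headI_cons_tail, c.blocks_sum]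
    have hpos := c.headI_blocks_pos
    ⟨⟨c.blocks.headI - 1, by omega⟩,
      ⟨c.blocks.tail, fun hi => c.blocks_pos (List.mem_of_mem_tail hi), by simp; omega⟩⟩
  invFun x := ⟨(x.1 + 1) :: x.2.blocks, by
    rintro i (_ | ⟨_, hi⟩)
    exacts [Nat.succ_pos _, x.2.blocks_pos hi], by simp [x.2.blocks_sum]; omega⟩
  left_inv c := by
    ext1
    simp only
    rw [Nat.sub_add_cancel c.headI_blocks_pos, ← c.blocks_eq_headI_cons_tail]
  right_inv _ := rfl

theorem sum_succ {M : Type*} [AddCommMonoid M] (n : ℕ) (f : List ℕ → M) :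
    ∑ c : Composition (n + 1), f c.blocks =
      ∑ x ∈ antidiagonal n, ∑ c : Composition x.2, f ((x.1 + 1) :: c.blocks) := by
  rw [Finset.Nat.sum_antidiagonal_eq_sum_range_succ_mk,
    ← Fin.sum_univ_eq_sum_range (fun r => ∑ c : Composition (n - r), f ((r + 1) :: c.blocks)),
    ← (consEquiv n).symm.sum_comp, Fintype.sum_sigma]
  rfl

end Composition

namespace PowerSeries

theorem coeff_invOfUnit_one_eq_sum_compositions {E : Type*} [Ring E] (Φ : E⟦X⟧) (n : ℕ) :
    coeff n (invOfUnit Φ 1) =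
      ∑ c : Composition n, (-1 : ℤ) ^ c.length • (c.blocks.map fun r => coeff r Φ).prod := by
  induction n using Nat.strong_induction_on with
  | _ n ih =>
  rcases n with _ | n
  · simp [coeff_invOfUnit, Composition.length, (default : Composition 0).blocks_eq_nil.2 rfl]
  · have := Composition.sum_succ n fun l => (-1 : ℤ) ^ l.length • (l.map fun r => coeff r Φ).prod
    rw [coeff_invOfUnit, this, Finset.Nat.sum_antidiagonal_succ]
    simp only [if_neg (lt_irrefl _), Units.val_one, inv_one, Nat.add_one_ne_zero, if_false,
      zero_add, neg_one_mul, ← sum_neg_distrib]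
    refine sum_congr rfl fun x hx => ?_
    have hx : x.2 < n + 1 := Finset.Nat.antidiagonal.snd_lt hx
    rw [if_pos hx, ih x.2 hx, mul_sum, ← sum_neg_distrib]
    refine sum_congr rfl fun c _ => ?_
    simp only [List.length_cons, List.map_cons, List.prod_cons, mul_smul_comm, pow_succ,
      mul_neg_one, neg_smul]

noncomputable section

section Euler

variable {S : Type*} [Semiring S]

/-- The Euler operator `t d/dt`. -/
def euler : S⟦X⟧ →+ S⟦X⟧ where
  toFun φ := mk fun n => n • coeff n φ
  map_zero' := by ext; simp
  map_add' φ ψ := by ext; simp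

@[simp]
theorem coeff_euler (φ : S⟦X⟧) (n : ℕ) : coeff n (euler φ) = n • coeff n φ := by
  simp [euler]

theorem euler_mul (φ ψ : S⟦X⟧) : euler (φ * ψ) = euler φ * ψ + φ * euler ψ := by
  ext n
  simp only [coeff_euler, coeff_mul, map_add, smul_sum, ← sum_add_distrib]
  refine sum_congr rfl fun x hx => ?_
  rw [← mem_antidiagonal.1 hx, add_smul, smul_mul_assoc, mul_smul_comm]

@[simp]
theorem euler_C (s : S) : euler (C s) = 0 := by
  ext n
  rcases n with _ | n <;> simp [coeff_C]

@[simp]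
theorem euler_X : euler (X : S⟦X⟧) = X := by
  ext n
  rcases n with _ | _ | n <;> simp [coeff_X]

end Euler

def eulerLogDeriv {E : Type*} [Ring E] (Φ : E⟦X⟧) : E⟦X⟧ := euler Φ * invOfUnit Φ 1

theorem coeff_succ_eulerLogDeriv {E : Type*} [Ring E] (Φ : E⟦X⟧) (m : ℕ) :
    coeff (m + 1) (eulerLogDeriv Φ) = ∑ c : Composition (m + 1),
      ((-1 : ℤ) ^ (c.length - 1) * c.blocks.headI) • (c.blocks.map fun r => coeff r Φ).prod := by
  have := Composition.sum_succ m fun l =>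
    ((-1 : ℤ) ^ (l.length - 1) * l.headI) • (l.map fun r => coeff r Φ).prod
  rw [eulerLogDeriv, coeff_mul, Finset.Nat.sum_antidiagonal_succ, this]
  simp only [coeff_euler, zero_smul, zero_mul, sum_const_zero, zero_add,
    coeff_invOfUnit_one_eq_sum_compositions, mul_sum]
  refine sum_congr rfl fun x _ => sum_congr rfl fun c _ => ?_
  rw [List.length_cons, Nat.add_sub_cancel, List.headI_cons, List.map_cons, List.prod_cons,
    mul_smul, Nat.cast_smul_eq_nsmul, smul_mul_assoc, mul_smul_comm, smul_comm]

@[simp]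
theorem constantCoeff_eulerLogDeriv {E : Type*} [Ring E] (Φ : E⟦X⟧) :
    constantCoeff (eulerLogDeriv Φ) = 0 := by
  rw [← coeff_zero_eq_constantCoeff_apply, eulerLogDeriv, coeff_mul]
  simp

section OperatorSeries

variable {R A : Type*} [CommRing R] [CommRing A] [Algebra R A]

/-- The `t`-linear extension of `Φ` to `A⟦t⟧` (the map `Ẑ` of the header when `Φ = Z`). -/
def opApply (Φ : (Module.End R A)⟦X⟧) (g : A⟦X⟧) : A⟦X⟧ :=
  mk fun n => ∑ x ∈ antidiagonal n, coeff x.1 Φ (coeff x.2 g)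

@[simp]
theorem coeff_opApply (Φ : (Module.End R A)⟦X⟧) (g : A⟦X⟧) (n : ℕ) :
    coeff n (opApply Φ g) = ∑ x ∈ antidiagonal n, coeff x.1 Φ (coeff x.2 g) :=
  coeff_mk _ _

theorem one_opApply (g : A⟦X⟧) : opApply (1 : (Module.End R A)⟦X⟧) g = g := by
  ext n
  rw [coeff_opApply, sum_eq_single_of_mem (0, n) (by simp)]
  · simp
  · rintro ⟨p, q⟩ hpq hne
    rw [coeff_one, if_neg, LinearMap.zero_apply]
    rintro rfl
    simp_all

theorem mul_opApply (Φ Ψ : (Module.End R A)⟦X⟧) (g : A⟦X⟧) :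
    opApply (Φ * Ψ) g = opApply Φ (opApply Ψ g) := by
  ext n
  simp only [coeff_opApply, coeff_mul, LinearMap.sum_apply, Module.End.mul_apply, map_sum]
  exact Finset.Nat.sum_antidiagonal_antidiagonal_assoc
    (fun u v q => coeff u Φ (coeff v Ψ (coeff q g))) n

theorem opApply_add (Φ : (Module.End R A)⟦X⟧) (g h : A⟦X⟧) :
    opApply Φ (g + h) = opApply Φ g + opApply Φ h := by
  ext n
  simp [sum_add_distrib]

theorem opApply_X_mul (Φ : (Module.End R A)⟦X⟧) (g : A⟦X⟧) :
    opApply Φ (X * g) = X * opApply Φ g := by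
  ext n
  rcases n with _ | n
  · simp
  · simp [Finset.Nat.sum_antidiagonal_succ', coeff_succ_X_mul]

theorem coeff_opApply_C (Φ : (Module.End R A)⟦X⟧) (a : A) (n : ℕ) :
    coeff n (opApply Φ (C a)) = coeff n Φ a := by
  rw [coeff_opApply, sum_eq_single_of_mem (n, 0) (by simp)]
  · simp
  · rintro ⟨p, q⟩ hpq hne
    rw [coeff_C, if_neg, map_zero]
    rintro rfl
    simp_all

theorem euler_opApply (Φ : (Module.End R A)⟦X⟧) (g : A⟦X⟧) :
    euler (opApply Φ g) = opApply (euler Φ) g + opApply Φ (euler g) := by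
  ext n
  simp only [coeff_euler, coeff_opApply, map_add, smul_sum, ← sum_add_distrib, map_nsmul,
    LinearMap.smul_apply]
  refine sum_congr rfl fun x hx => ?_
  rw [← mem_antidiagonal.1 hx, add_smul]

def lmulSeries : A⟦X⟧ →+* (Module.End R A)⟦X⟧ := map (Algebra.lmul R A).toRingHom

theorem lmulSeries_opApply (c g : A⟦X⟧) : opApply (lmulSeries (R := R) c) g = c * g := by
  ext n
  simp [lmulSeries, coeff_mul]

def IsHasseSchmidt (Φ : (Module.End R A)⟦X⟧) : Prop :=
  constantCoeff Φ = 1 ∧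
    ∀ n a b, coeff n Φ (a * b) = ∑ x ∈ antidiagonal n, coeff x.1 Φ a * coeff x.2 Φ b

namespace IsHasseSchmidt

variable {Φ : (Module.End R A)⟦X⟧}

/-- The Hasse–Schmidt condition, extended from constants to series: `Φ ∘ (g ·) = (Φ g ·) ∘ Φ`.
It reduces the multiplicativity of `opApply Φ` to the associativity of `opApply`. -/
theorem mul_lmulSeries (hΦ : IsHasseSchmidt Φ) (g : A⟦X⟧) :
    Φ * lmulSeries g = lmulSeries (opApply Φ g) * Φ := by
  ext n b
  simp only [lmulSeries, coeff_mul, coeff_map, LinearMap.sum_apply, Module.End.mul_apply,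
    AlgHom.toRingHom_eq_coe, RingHom.coe_coe, Algebra.coe_lmul_eq_mul, LinearMap.mul_apply',
    hΦ.2, coeff_opApply, sum_mul]
  exact Finset.Nat.sum_antidiagonal_antidiagonal_right_comm
    (fun u v q => coeff u Φ (coeff q g) * coeff v Φ b) n

theorem opApply_mul (hΦ : IsHasseSchmidt Φ) (g h : A⟦X⟧) :
    opApply Φ (g * h) = opApply Φ g * opApply Φ h := by
  rw [← lmulSeries_opApply (R := R), ← mul_opApply, hΦ.mul_lmulSeries, mul_opApply,
    lmulSeries_opApply]

def ringEquiv (hΦ : IsHasseSchmidt Φ) : A⟦X⟧ ≃+* A⟦X⟧ where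
  toFun := opApply Φ
  invFun := opApply (invOfUnit Φ 1)
  left_inv g := by rw [← mul_opApply, invOfUnit_mul _ _ hΦ.1, one_opApply]
  right_inv g := by rw [← mul_opApply, mul_invOfUnit _ _ hΦ.1, one_opApply]
  map_mul' := hΦ.opApply_mul
  map_add' := opApply_add Φ

theorem opApply_eulerLogDeriv_C (hΦ : IsHasseSchmidt Φ) (a : A) :
    opApply (eulerLogDeriv Φ) (C a) = -hΦ.ringEquiv (euler (hΦ.ringEquiv.symm (C a))) := by
  have h := euler_opApply Φ (hΦ.ringEquiv.symm (C a))
  rw [show opApply Φ (hΦ.ringEquiv.symm (C a)) = C a from hΦ.ringEquiv.apply_symm_apply _,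
    euler_C] at h
  rw [eulerLogDeriv, mul_opApply, eq_neg_iff_add_eq_zero]
  exact h.symm

theorem coeff_eulerLogDeriv_mul (hΦ : IsHasseSchmidt Φ) (m : ℕ) (a b : A) :
    coeff m (eulerLogDeriv Φ) (a * b) =
      a * coeff m (eulerLogDeriv Φ) b + b * coeff m (eulerLogDeriv Φ) a := by
  simp only [← coeff_opApply_C, hΦ.opApply_eulerLogDeriv_C]
  rw [map_mul C, map_mul, euler_mul, map_add, map_mul, map_mul, RingEquiv.apply_symm_apply,
    RingEquiv.apply_symm_apply, neg_add, map_add, ← neg_mul, ← mul_neg, coeff_mul_C,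
    coeff_C_mul]
  ring

theorem coeff_succ_eulerLogDeriv_apply (hΦ : IsHasseSchmidt Φ) {a b : A}
    (hab : opApply Φ (C a) = C a + X * C b) (m : ℕ) :
    coeff (m + 1) (eulerLogDeriv Φ) a = coeff m (C b) - coeff m (eulerLogDeriv Φ) b := by
  have hsymm : hΦ.ringEquiv.symm (C a) = C a - X * hΦ.ringEquiv.symm (C b) := by
    rw [eq_sub_iff_add_eq, show X * hΦ.ringEquiv.symm (C b) = hΦ.ringEquiv.symm (X * C b) from
      (opApply_X_mul _ _).symm, ← map_add, ← hab]
    exact hΦ.ringEquiv.symm_apply_apply _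
  have hX : hΦ.ringEquiv X = X := by
    have h := (opApply_X_mul Φ 1).trans (congrArg (X * ·) (map_one hΦ.ringEquiv))
    simp only [mul_one] at h
    exact h
  have hθ : opApply (eulerLogDeriv Φ) (C a) = X * (C b - opApply (eulerLogDeriv Φ) (C b)) := by
    rw [hΦ.opApply_eulerLogDeriv_C, hΦ.opApply_eulerLogDeriv_C, hsymm, map_sub, euler_C,
      euler_mul, euler_X, zero_sub, map_neg, neg_neg, map_add, map_mul, map_mul, hX,
      RingEquiv.apply_symm_apply, sub_neg_eq_add, mul_add]
  rw [← coeff_opApply_C, hθ, coeff_succ_X_mul, map_sub, coeff_opApply_C]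

def eulerLogDerivation (hΦ : IsHasseSchmidt Φ) (m : ℕ) : Derivation R A A :=
  Derivation.mk' (coeff m (eulerLogDeriv Φ)) fun a b => by
    rw [hΦ.coeff_eulerLogDeriv_mul, smul_eq_mul, smul_eq_mul]

@[simp]
theorem eulerLogDerivation_apply (hΦ : IsHasseSchmidt Φ) (m : ℕ) (a : A) :
    hΦ.eulerLogDerivation m a = coeff m (eulerLogDeriv Φ) a :=
  rfl

end IsHasseSchmidt

end OperatorSeries

end

end PowerSeries

theorem List.prod_map_apply_eq_foldr {R M : Type*} [Semiring R] [AddCommMonoid M] [Module R M]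
    (f : ℕ → Module.End R M) (l : List ℕ) (a : M) :
    (l.map f).prod a = l.foldr (fun r b => f r b) a := by
  induction l with
  | nil => rfl
  | cons r l ih => simp [Module.End.mul_apply, ih]

section Substitution

variable {k : Type*} [Field k] {n : ℕ} (F : Fin n → Pn k n)

theorem Zc_zero (a : Pn k n) : Zc F 0 a = a := by
  induction a using MvPolynomial.induction_on with
  | C c => simp [Zc, Polynomial.coeff_C]
  | add p q hp hq => simp_all [Zc]
  | mul_X p i hp => simp_all [Zc, Polynomial.mul_coeff_zero]

theorem Zc_X (r : ℕ) (i : Fin n) :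
    Zc F r (X i) = if r = 0 then X i else if r = 1 then F i else 0 := by
  rcases r with _ | _ | r <;> simp [Zc, Polynomial.coeff_X, Polynomial.coeff_C]

noncomputable def substSeries : (Module.End k (Pn k n))⟦X⟧ :=
  PowerSeries.mk fun r => ((Polynomial.lcoeff (Pn k n) r).restrictScalars k).comp
    (aeval fun j => Polynomial.C (X j) + Polynomial.C (F j) * Polynomial.X).toLinearMap

theorem coeff_substSeries_apply (r : ℕ) (a : Pn k n) :
    PowerSeries.coeff r (substSeries F) a = Zc F r a := by
  simp [substSeries, Zc]

theorem isHasseSchmidt_substSeries : (substSeries F).IsHasseSchmidt := by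
  refine ⟨LinearMap.ext fun a => ?_, fun r a b => ?_⟩
  · rw [← PowerSeries.coeff_zero_eq_constantCoeff_apply, coeff_substSeries_apply, Zc_zero]
    rfl
  · simp only [coeff_substSeries_apply, Zc, map_mul, Polynomial.coeff_mul]

theorem opApply_substSeries_C_X (i : Fin n) :
    (substSeries F).opApply (PowerSeries.C (X i)) =
      PowerSeries.C (X i) + PowerSeries.X * PowerSeries.C (F i) := by
  ext r
  rw [PowerSeries.coeff_opApply_C, coeff_substSeries_apply, Zc_X]
  rcases r with _ | _ | r <;> simp [PowerSeries.coeff_X]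

theorem eulerLogDerivation_substSeries_succ (m : ℕ) :
    (isHasseSchmidt_substSeries F).eulerLogDerivation (m + 1) =
      (-1 : ℤ) ^ m • rpow (mkDerivation k F) (m + 1) := by
  induction m with
  | zero =>
    refine derivation_ext fun i => ?_
    rw [PowerSeries.IsHasseSchmidt.eulerLogDerivation_apply,
      (isHasseSchmidt_substSeries F).coeff_succ_eulerLogDeriv_apply (opApply_substSeries_C_X F i)]
    simp [rpow]
  | succ m ih =>
    refine derivation_ext fun i => ?_
    rw [PowerSeries.IsHasseSchmidt.eulerLogDerivation_apply,
      (isHasseSchmidt_substSeries F).coeff_succ_eulerLogDeriv_apply (opApply_substSeries_C_X F i),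
      ← (isHasseSchmidt_substSeries F).eulerLogDerivation_apply, ih]
    simp [rpow, lsMul, pow_succ]

end Substitution

theorem theta_eq_rpow_apply_general (F : Fin n → Pn k n) (m : ℕ) (hm : 1 ≤ m)
    (a : Pn k n) :
    (∑ c : Composition m,
        (-1 : Pn k n) ^ (c.length - 1) * ((c.blocks.headI : ℕ) : Pn k n) *
          (c.blocks.foldr (fun r b => Zc F r b) a)) =
      (-1 : Pn k n) ^ (m - 1) * (rpow (MvPolynomial.mkDerivation k F) m a) := by
  obtain ⟨m, rfl⟩ := Nat.exists_eq_add_of_le' hm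
  have h := congrArg (· a) (eulerLogDerivation_substSeries_succ F m)
  simp only [PowerSeries.IsHasseSchmidt.eulerLogDerivation_apply,
    PowerSeries.coeff_succ_eulerLogDeriv, LinearMap.sum_apply,
    LinearMap.smul_apply, List.prod_map_apply_eq_foldr, coeff_substSeries_apply,
    Derivation.smul_apply] at h
  simp only [zsmul_eq_mul] at h
  push_cast at h
  rw [Nat.add_sub_cancel, ← h]

/-- `Σ (−1)^{k−1} r₁ Z_{r₁}(Z_{r₂}(⋯ Z_{r_k}(a)⋯)) = (−1)^{m−1} D^{[m]}(a)`,
the sum over all compositions `(r₁,…,r_k)` of `m`. -/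
theorem theta_eq_rpow_apply (hn : 1 ≤ n) (F : Fin n → Pn k n) (m : ℕ) (hm : 1 ≤ m)
    (a : Pn k n) :
    (∑ c : Composition m,
        (-1 : Pn k n) ^ (c.length - 1) * ((c.blocks.headI : ℕ) : Pn k n) *
          (c.blocks.foldr (fun r b => Zc F r b) a)) =
      (-1 : Pn k n) ^ (m - 1) * (rpow (MvPolynomial.mkDerivation k F) m a) :=
  theta_eq_rpow_apply_general F m hm a
end
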